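/- Let α_1, β_1, α_2, β_2 > 0, let g(α_1,β_1,α_2,β_2) = ∫_0^1 f(x;α_1,β_1) I_x(α_2,β_2) dx and h(α_1,β_1,α_2,β_2) = B(α_1+α_2, β_1+β_2)/(B(α_1,β_1) B(α_2,β_2)). Then g(α_1, β_1, α_2+1, β_2) = g(α_1,β_1,α_2,β_2) − h(α_1,β_1,α_2,β_2)/α_2. -/

import Mathlib

/-!
Differentiating `x ^ a * (1 - x) ^ b` and integrating from `0` to `x` gives
`I_x(a + 1, b) = I_x(a, b) - x ^ a * (1 - x) ^ b / (a * B(a, b))` (at `x = 1` this is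
`(a + b) B(a + 1, b) = a B(a, b)`). Integrating this identity against the Beta(α₁, β₁)
density, the correction term becomes `B(α₁ + α₂, β₁ + β₂) / (B(α₁, β₁) α₂ B(α₂, β₂)) = h / α₂`.
-/

open MeasureTheory Real Set

/-- The Beta function `B(a,b) = ∫₀¹ t^(a-1) (1-t)^(b-1) dt`. -/
noncomputable def betaFn (a b : ℝ) : ℝ :=
  ∫ t in (0:ℝ)..1, t ^ (a - 1) * (1 - t) ^ (b - 1)

/-- The Beta(a,b) probability density on `[0,1]`. -/
noncomputable def betaPdf (a b : ℝ) (x : ℝ) : ℝ :=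
  x ^ (a - 1) * (1 - x) ^ (b - 1) / betaFn a b

/-- The cumulative distribution function of Beta(a,b). -/
noncomputable def betaCdf (a b : ℝ) (x : ℝ) : ℝ :=
  (∫ t in (0:ℝ)..x, t ^ (a - 1) * (1 - t) ^ (b - 1)) / betaFn a b

/-- `g(α₁,β₁,α₂,β₂)`: the probability that an independent Beta(α₁,β₁) sample exceeds an
independent Beta(α₂,β₂) sample. -/
noncomputable def probG (a₁ b₁ a₂ b₂ : ℝ) : ℝ :=
  ∫ x in (0:ℝ)..1, betaPdf a₁ b₁ x * betaCdf a₂ b₂ x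

/-- `h(α₁,β₁,α₂,β₂) = B(α₁+α₂,β₁+β₂)/(B(α₁,β₁) B(α₂,β₂))`. -/
noncomputable def probH (a₁ b₁ a₂ b₂ : ℝ) : ℝ :=
  betaFn (a₁ + a₂) (b₁ + b₂) / (betaFn a₁ b₁ * betaFn a₂ b₂)

open intervalIntegral

lemma intervalIntegrable_rpow_mul_one_sub_rpow {a b : ℝ} (ha : 0 < a) (hb : 0 < b) :
    IntervalIntegrable (fun t : ℝ => t ^ (a - 1) * (1 - t) ^ (b - 1)) volume 0 1 := by
  have hleft :
      IntervalIntegrable (fun t : ℝ => t ^ (a - 1) * (1 - t) ^ (b - 1)) volume 0 (1 / 2) := by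
    refine (intervalIntegrable_rpow' (by linarith)).mul_continuousOn ?_
    refine ContinuousOn.rpow_const (by fun_prop) fun t ht => Or.inl ?_
    rw [uIcc_of_le (by norm_num)] at ht
    linarith [ht.2]
  have hright :
      IntervalIntegrable (fun t : ℝ => t ^ (a - 1) * (1 - t) ^ (b - 1)) volume (1 / 2) 1 := by
    have h := ((intervalIntegrable_rpow' (r := b - 1) (by linarith) (a := 0)
      (b := 1 / 2)).comp_sub_left 1).symm
    norm_num at h
    refine h.continuousOn_mul (ContinuousOn.rpow_const (by fun_prop) fun t ht => Or.inl ?_)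
    rw [uIcc_of_le (by norm_num)] at ht
    linarith [ht.1]
  exact hleft.trans hright

lemma continuous_rpow_mul_one_sub_rpow {a b : ℝ} (ha : 0 ≤ a) (hb : 0 ≤ b) :
    Continuous (fun t : ℝ => t ^ a * (1 - t) ^ b) :=
  (continuous_id.rpow_const fun _ => Or.inr ha).mul
    ((continuous_const.sub continuous_id).rpow_const fun _ => Or.inr hb)

lemma hasDerivAt_rpow_mul_one_sub_rpow {a b t : ℝ} (ht₀ : 0 < t) (ht₁ : t < 1) :
    HasDerivAt (fun t : ℝ => t ^ a * (1 - t) ^ b)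
      (a * (t ^ (a - 1) * (1 - t) ^ (b - 1)) - (a + b) * (t ^ a * (1 - t) ^ (b - 1))) t := by
  have hpow : HasDerivAt (fun t : ℝ => t ^ a) (a * t ^ (a - 1)) t :=
    hasDerivAt_rpow_const (Or.inl ht₀.ne')
  have hpow' : HasDerivAt (fun t : ℝ => (1 - t) ^ b) (-1 * b * (1 - t) ^ (b - 1)) t :=
    ((hasDerivAt_id' t).const_sub 1).rpow_const (Or.inl (by linarith))
  have h1t : 1 - t ≠ 0 := by linarith
  refine (hpow.mul hpow').congr_deriv ?_
  rw [rpow_sub_one ht₀.ne', rpow_sub_one h1t]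
  field_simp
  ring

lemma integral_rpow_mul_one_sub_rpow_succ {a b x : ℝ} (ha : 0 < a) (hb : 0 < b)
    (hx : x ∈ Icc (0 : ℝ) 1) :
    (a + b) * ∫ t in (0 : ℝ)..x, t ^ a * (1 - t) ^ (b - 1)
      = a * (∫ t in (0 : ℝ)..x, t ^ (a - 1) * (1 - t) ^ (b - 1)) - x ^ a * (1 - x) ^ b := by
  have hsub : uIcc 0 x ⊆ uIcc (0 : ℝ) 1 :=
    uIcc_subset_uIcc left_mem_uIcc (by simpa [uIcc_of_le])
  have hint : IntervalIntegrable (fun t : ℝ => t ^ (a - 1) * (1 - t) ^ (b - 1)) volume 0 x :=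
    (intervalIntegrable_rpow_mul_one_sub_rpow ha hb).mono_set hsub
  have hint' : IntervalIntegrable (fun t : ℝ => t ^ a * (1 - t) ^ (b - 1)) volume 0 x := by
    simpa using
      (intervalIntegrable_rpow_mul_one_sub_rpow (a := a + 1) (by linarith) hb).mono_set hsub
  have hftc := integral_eq_sub_of_hasDerivAt_of_le hx.1
    (continuous_rpow_mul_one_sub_rpow ha.le hb.le).continuousOn
    (fun t ht => hasDerivAt_rpow_mul_one_sub_rpow ht.1 (ht.2.trans_le hx.2))
    ((hint.const_mul a).sub (hint'.const_mul (a + b)))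
  rw [intervalIntegral.integral_sub (hint.const_mul a) (hint'.const_mul (a + b)),
    intervalIntegral.integral_const_mul, intervalIntegral.integral_const_mul, zero_rpow ha.ne',
    zero_mul, sub_zero] at hftc
  linarith

lemma betaFn_add_one {a b : ℝ} (ha : 0 < a) (hb : 0 < b) :
    (a + b) * betaFn (a + 1) b = a * betaFn a b := by
  have h := integral_rpow_mul_one_sub_rpow_succ ha hb (x := 1) (by norm_num)
  rw [sub_self, zero_rpow hb.ne', mul_zero, sub_zero] at h
  simpa [betaFn] using h

lemma betaCdf_add_one {a b x : ℝ} (ha : 0 < a) (hb : 0 < b) (hx : x ∈ Icc (0 : ℝ) 1) :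
    betaCdf (a + 1) b x = betaCdf a b x - x ^ a * (1 - x) ^ b / (a * betaFn a b) := by
  have hab : a + b ≠ 0 := by positivity
  have hB : betaFn (a + 1) b = a * betaFn a b / (a + b) := by
    rw [← betaFn_add_one ha hb, mul_div_cancel_left₀ _ hab]
  have hJ : ∫ t in (0 : ℝ)..x, t ^ (a + 1 - 1) * (1 - t) ^ (b - 1)
      = (a * (∫ t in (0 : ℝ)..x, t ^ (a - 1) * (1 - t) ^ (b - 1)) - x ^ a * (1 - x) ^ b)
        / (a + b) := by
    rw [add_sub_cancel_right, ← integral_rpow_mul_one_sub_rpow_succ ha hb hx,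
      mul_div_cancel_left₀ _ hab]
  rw [betaCdf, betaCdf, hJ, hB, div_div_div_cancel_right₀ hab, sub_div,
    mul_div_mul_left _ _ ha.ne']

lemma intervalIntegrable_betaPdf {a b : ℝ} (ha : 0 < a) (hb : 0 < b) :
    IntervalIntegrable (betaPdf a b) volume 0 1 :=
  (intervalIntegrable_rpow_mul_one_sub_rpow ha hb).div_const _

lemma continuousOn_betaCdf {a b : ℝ} (ha : 0 < a) (hb : 0 < b) :
    ContinuousOn (betaCdf a b) (uIcc 0 1) :=
  (continuousOn_primitive_interval' (intervalIntegrable_rpow_mul_one_sub_rpow ha hb)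
    left_mem_uIcc).div_const _

lemma integral_betaPdf_mul_rpow_mul_one_sub_rpow (a b c d : ℝ) :
    ∫ x in (0 : ℝ)..1, betaPdf a b x * (x ^ c * (1 - x) ^ d)
      = betaFn (a + c) (b + d) / betaFn a b := by
  rw [betaFn, ← intervalIntegral.integral_div]
  refine integral_congr_ae ?_
  filter_upwards [volume.ae_ne (1 : ℝ)] with x hx₁ hx
  rw [uIoc_of_le zero_le_one] at hx
  have hx₀ : 0 < x := hx.1
  have hx₁' : 0 < 1 - x := sub_pos.mpr (lt_of_le_of_ne hx.2 hx₁)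
  rw [betaPdf, add_sub_right_comm a, add_sub_right_comm b, rpow_add hx₀, rpow_add hx₁']
  ring

/-- Recurrence: incrementing α₂ by one. -/
theorem probG_alpha2_succ (a₁ b₁ a₂ b₂ : ℝ)
    (hα₁ : 0 < a₁) (hβ₁ : 0 < b₁) (hα₂ : 0 < a₂) (hβ₂ : 0 < b₂) :
    probG a₁ b₁ (a₂ + 1) b₂ = probG a₁ b₁ a₂ b₂ - probH a₁ b₁ a₂ b₂ / a₂ := by
  have hpdf := intervalIntegrable_betaPdf hα₁ hβ₁
  have hcorr := (continuous_rpow_mul_one_sub_rpow hα₂.le hβ₂.le).continuousOn (s := uIcc 0 1)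
  have hsplit : probG a₁ b₁ (a₂ + 1) b₂
      = ∫ x in (0 : ℝ)..1, (betaPdf a₁ b₁ x * betaCdf a₂ b₂ x
        - betaPdf a₁ b₁ x * (x ^ a₂ * (1 - x) ^ b₂) / (a₂ * betaFn a₂ b₂)) := by
    refine integral_congr fun x hx => ?_
    rw [uIcc_of_le zero_le_one] at hx
    simp only [betaCdf_add_one hα₂ hβ₂ hx]
    ring
  rw [hsplit, intervalIntegral.integral_sub (hpdf.mul_continuousOn (continuousOn_betaCdf hα₂ hβ₂))
    ((hpdf.mul_continuousOn hcorr).div_const _), intervalIntegral.integral_div,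
    integral_betaPdf_mul_rpow_mul_one_sub_rpow, probG, probH]
  field_simp
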